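/- arXiv:2106.11344 — 2 statements merged into one kernel-verified Lean document; each statement's English description precedes it below -/
import Mathlib

section
/- Let P_s and P_t be probability distributions on an input space X, let f_s and f_t be the source and target labeling functions taking values in [0,1], and let the loss be ℓ(h(x), y) = |h(x) − y|. Then for every hypothesis h in a class H of functions from X to [0,1], the target risk satisfies R^ℓ_T(h) ≤ R^ℓ_S(h) + D_TV(P_s‖P_t) + min{ E_{x∼P_s}[|f_t(x) − f_s(x)|], E_{x∼P_t}[|f_t(x) − f_s(x)|] }, where D_TV(P_s‖P_t) = sup_T |E_{x∼P_s}[T(x)] − E_{x∼P_t}[T(x)]| is the total variation distance, the supremum being over all measurable functions T with values in [0,1]. -/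
open MeasureTheory

lemma aux_int_abs {X : Type*} [MeasurableSpace X] (μ : Measure X) [IsProbabilityMeasure μ]
    {a b : X → ℝ} (ha : Measurable a) (hb : Measurable b)
    (ha01 : ∀ x, a x ∈ Set.Icc (0:ℝ) 1) (hb01 : ∀ x, b x ∈ Set.Icc (0:ℝ) 1) :
    Integrable (fun x => |a x - b x|) μ := by
  refine (integrable_const (1:ℝ)).mono' ((ha.sub hb).abs).aestronglyMeasurable ?_
  filter_upwards with x
  have h1 := ha01 x; have h2 := hb01 x
  simp only [Set.mem_Icc] at h1 h2
  rw [Real.norm_eq_abs, abs_abs, abs_sub_le_iff]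
  constructor <;> linarith

lemma aux_tri {X : Type*} [MeasurableSpace X] (μ : Measure X) [IsProbabilityMeasure μ]
    {a b c : X → ℝ} (ha : Measurable a) (hb : Measurable b) (hc : Measurable c)
    (ha01 : ∀ x, a x ∈ Set.Icc (0:ℝ) 1) (hb01 : ∀ x, b x ∈ Set.Icc (0:ℝ) 1)
    (hc01 : ∀ x, c x ∈ Set.Icc (0:ℝ) 1) :
    (∫ x, |a x - c x| ∂μ) ≤ (∫ x, |a x - b x| ∂μ) + ∫ x, |c x - b x| ∂μ := by
  rw [← integral_add (aux_int_abs μ ha hb ha01 hb01) (aux_int_abs μ hc hb hc01 hb01)]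
  refine integral_mono (aux_int_abs μ ha hc ha01 hc01)
    ((aux_int_abs μ ha hb ha01 hb01).add (aux_int_abs μ hc hb hc01 hb01)) ?_
  intro x
  calc |a x - c x| ≤ |a x - b x| + |b x - c x| := abs_sub_le _ _ _
  _ = |a x - b x| + |c x - b x| := by rw [abs_sub_comm (b x)]

/-- Theorem of Ben-David et al.: for probability distributions `P_s, P_t` on `X`,
labeling functions `f_s, f_t : X → [0,1]`, the loss `ℓ(h(x), y) = |h(x) − y|`, and any
hypothesis `h` in a class `H` of (measurable, `[0,1]`-valued) functions,
`R^ℓ_T(h) ≤ R^ℓ_S(h) + D_TV(P_s‖P_t) + min{E_{P_s}|f_t − f_s|, E_{P_t}|f_t − f_s|}`,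
where `D_TV(P_s‖P_t) = sup_T |E_{P_s}[T] − E_{P_t}[T]|`, the supremum being over all
measurable `T : X → ℝ` with values in `[0,1]`. -/
theorem tv_generalization_bound
    {X : Type*} [MeasurableSpace X]
    (μs μt : Measure X) [IsProbabilityMeasure μs] [IsProbabilityMeasure μt]
    (H : Set (X → ℝ))
    (hH : ∀ g ∈ H, Measurable g ∧ ∀ x, g x ∈ Set.Icc (0:ℝ) 1)
    (fs ft : X → ℝ)
    (hfs : Measurable fs) (hfs01 : ∀ x, fs x ∈ Set.Icc (0:ℝ) 1)
    (hft : Measurable ft) (hft01 : ∀ x, ft x ∈ Set.Icc (0:ℝ) 1)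
    (h : X → ℝ) (hh : h ∈ H) :
    (∫ x, |h x - ft x| ∂μt) ≤
      (∫ x, |h x - fs x| ∂μs)
        + (⨆ T : {T : X → ℝ // Measurable T ∧ ∀ x, T x ∈ Set.Icc (0:ℝ) 1},
            |(∫ x, T.1 x ∂μs) - ∫ x, T.1 x ∂μt|)
        + min (∫ x, |ft x - fs x| ∂μs) (∫ x, |ft x - fs x| ∂μt) := by
  obtain ⟨hhm, hh01⟩ := hH h hh
  set D := (⨆ T : {T : X → ℝ // Measurable T ∧ ∀ x, T x ∈ Set.Icc (0:ℝ) 1},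
            |(∫ x, T.1 x ∂μs) - ∫ x, T.1 x ∂μt|) with hD
  -- boundedness of the sup family
  have hbdd : BddAbove (Set.range fun T : {T : X → ℝ // Measurable T ∧ ∀ x, T x ∈ Set.Icc (0:ℝ) 1} =>
      |(∫ x, T.1 x ∂μs) - ∫ x, T.1 x ∂μt|) := by
    refine ⟨2, ?_⟩
    rintro r ⟨T, rfl⟩
    have key : ∀ (μ : Measure X) [IsProbabilityMeasure μ], |∫ x, T.1 x ∂μ| ≤ 1 := by
      intro μ _
      calc |∫ x, T.1 x ∂μ| ≤ ∫ x, |T.1 x| ∂μ := by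
              simpa [Real.norm_eq_abs] using norm_integral_le_integral_norm (μ := μ) T.1
        _ ≤ ∫ _x, (1:ℝ) ∂μ := by
              refine integral_mono_of_nonneg (Filter.Eventually.of_forall fun x => abs_nonneg _)
                (integrable_const 1) (Filter.Eventually.of_forall fun x => ?_)
              have := T.2.2 x; rw [Set.mem_Icc] at this
              show |T.1 x| ≤ 1
              rw [abs_of_nonneg this.1]; exact this.2
        _ = 1 := by simp
    calc |(∫ x, T.1 x ∂μs) - ∫ x, T.1 x ∂μt| ≤ |∫ x, T.1 x ∂μs| + |∫ x, T.1 x ∂μt| :=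
          abs_sub _ _
      _ ≤ 2 := by have := key μs; have := key μt; linarith [key μs, key μt]
  -- generic transfer lemma: for measurable g in [0,1], ∫ g dμt ≤ ∫ g dμs + D
  have transfer : ∀ (g : X → ℝ), Measurable g → (∀ x, g x ∈ Set.Icc (0:ℝ) 1) →
      (∫ x, g x ∂μt) ≤ (∫ x, g x ∂μs) + D := by
    intro g hg hg01
    have hle : |(∫ x, g x ∂μs) - ∫ x, g x ∂μt| ≤ D := by
      exact le_ciSup hbdd (⟨g, hg, hg01⟩ : {T : X → ℝ // Measurable T ∧ ∀ x, T x ∈ Set.Icc (0:ℝ) 1})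
    have := neg_abs_le ((∫ x, g x ∂μs) - ∫ x, g x ∂μt)
    linarith [abs_nonneg ((∫ x, g x ∂μs) - ∫ x, g x ∂μt)]
  have habs01 : ∀ {a b : X → ℝ}, (∀ x, a x ∈ Set.Icc (0:ℝ) 1) → (∀ x, b x ∈ Set.Icc (0:ℝ) 1) →
      ∀ x, |a x - b x| ∈ Set.Icc (0:ℝ) 1 := by
    intro a b ha hb x
    have h1 := ha x; have h2 := hb x
    simp only [Set.mem_Icc] at *
    refine ⟨abs_nonneg _, ?_⟩
    rw [abs_sub_le_iff]; constructor <;> [skip; skip] <;> linarith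
  rcases min_cases (∫ x, |ft x - fs x| ∂μs) (∫ x, |ft x - fs x| ∂μt) with ⟨heq, _⟩ | ⟨heq, _⟩
  · -- min = source term: bound via ∫|h-ft|dμt ≤ ∫|h-ft|dμs + D ≤ ∫|h-fs|dμs + ∫|ft-fs|dμs + D
    rw [heq]
    have t1 : (∫ x, |h x - ft x| ∂μt) ≤ (∫ x, |h x - ft x| ∂μs) + D :=
      transfer _ (hhm.sub hft).abs (habs01 hh01 hft01)
    have t2 : (∫ x, |h x - ft x| ∂μs) ≤ (∫ x, |h x - fs x| ∂μs) + ∫ x, |ft x - fs x| ∂μs :=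
      aux_tri μs hhm hfs hft hh01 hfs01 hft01
    linarith
  · -- min = target term
    rw [heq]
    have t1 : (∫ x, |h x - ft x| ∂μt) ≤ (∫ x, |h x - fs x| ∂μt) + ∫ x, |ft x - fs x| ∂μt :=
      aux_tri μt hhm hfs hft hh01 hfs01 hft01
    have t2 : (∫ x, |h x - fs x| ∂μt) ≤ (∫ x, |h x - fs x| ∂μs) + D :=
      transfer _ (hhm.sub hfs).abs (habs01 hh01 hfs01)
    linarith
end

section
/- Let γ > 0 and let p^z_s, p^z_t be probability densities on Z. Consider the MDD objective γ d_{s,t} = γ E_{z∼p^z_s}[log ĥ'(z)_{argmax ĥ(z)}] + E_{z∼p^z_t}[log(1 − ĥ'(z)_{argmax ĥ(z)})] over an unconstrained function class Ĥ of classifiers ĥ' taking values in the probability simplex. Then the maximum over ĥ' satisfies max_{ĥ'} γ d_{s,t} = (γ + 1) JS_γ(p^z_s‖p^z_t) + γ log γ − (γ + 1) log(γ + 1), where JS_γ is the γ-weighted Jensen–Shannon divergence JS_γ(p‖q) = (γ/(γ+1)) KL(p‖(γp + q)/(γ+1)) + (1/(γ+1)) KL(q‖(γp + q)/(γ+1)).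 -/
open MeasureTheory


lemma key_pointwise (γ p q t : ℝ) (hγ : 0 < γ) (hp : 0 < p) (hq : 0 < q)
    (ht0 : 0 < t) (ht1 : t < 1) :
    γ * (Real.log t * p) + Real.log (1 - t) * q
      ≤ γ * (Real.log (γ * p / (γ * p + q)) * p)
        + Real.log (q / (γ * p + q)) * q := by
  have hs : 0 < γ * p + q := by positivity
  have h1t : 0 < 1 - t := by linarith
  have hx1 : (0:ℝ) < t / (γ * p / (γ * p + q)) := by positivity
  have hx2 : (0:ℝ) < (1 - t) / (q / (γ * p + q)) := by positivity
  have h1 := Real.log_le_sub_one_of_pos hx1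
  have h2 := Real.log_le_sub_one_of_pos hx2
  rw [Real.log_div ht0.ne' (by positivity)] at h1
  rw [Real.log_div h1t.ne' (by positivity)] at h2
  have c1 : t / (γ * p / (γ * p + q)) = t * (γ * p + q) / (γ * p) := by field_simp
  have c2 : (1 - t) / (q / (γ * p + q)) = (1 - t) * (γ * p + q) / q := by field_simp
  rw [c1] at h1
  rw [c2] at h2
  have m1 := mul_le_mul_of_nonneg_left h1 (mul_pos hγ hp).le
  have m2 := mul_le_mul_of_nonneg_left h2 hq.le
  have d1 : γ * p * (t * (γ * p + q) / (γ * p) - 1) = t * (γ * p + q) - γ * p := by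
    field_simp
  have d2 : q * ((1 - t) * (γ * p + q) / q - 1) = (1 - t) * (γ * p + q) - q := by
    field_simp
  rw [d1] at m1
  rw [d2] at m2
  nlinarith [m1, m2]


/-- MDD / γ-weighted JS: for `γ > 0`, probability densities `p^z_s, p^z_t`
on `Z` (w.r.t. a base measure `ν`), and the MDD objective
`γ d_{s,t}(ĥ') = γ E_{p^z_s}[log ĥ'(z)] + E_{p^z_t}[log(1 − ĥ'(z))]` maximized over an
unconstrained class of (measurable) domain classifiers `ĥ' : Z → (0,1)` (equivalently,
over the coordinate `ĥ'(z)_{argmax ĥ(z)}`), the maximum — attained at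
`ĥ'(z) = γ p^z_s(z)/(γ p^z_s(z) + p^z_t(z))` — equals
`(γ+1) JS_γ(p^z_s‖p^z_t) + γ log γ − (γ+1) log(γ+1)`, where
`JS_γ(p‖q) = (γ/(γ+1)) KL(p‖(γp+q)/(γ+1)) + (1/(γ+1)) KL(q‖(γp+q)/(γ+1))`. -/
theorem mdd_optimal_value_gamma_js
    {Z : Type*} [MeasurableSpace Z] (ν : Measure Z)
    (γ : ℝ) (hγ : 0 < γ)
    (ps pt : Z → ℝ)
    (hpsm : Measurable ps) (hptm : Measurable pt)
    (hps0 : ∀ z, 0 < ps z) (hpt0 : ∀ z, 0 < pt z)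
    (hps1 : ∫ z, ps z ∂ν = 1) (hpt1 : ∫ z, pt z ∂ν = 1)
    (hint1 : Integrable
      (fun z => Real.log (γ * ps z / (γ * ps z + pt z)) * ps z) ν)
    (hint2 : Integrable
      (fun z => Real.log (1 - γ * ps z / (γ * ps z + pt z)) * pt z) ν) :
    (∀ g : Z → ℝ, Measurable g → (∀ z, g z ∈ Set.Ioo (0:ℝ) 1) →
        Integrable (fun z => Real.log (g z) * ps z) ν →
        Integrable (fun z => Real.log (1 - g z) * pt z) ν →
        γ * (∫ z, Real.log (g z) * ps z ∂ν)
            + (∫ z, Real.log (1 - g z) * pt z ∂ν)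
          ≤ γ * (∫ z, Real.log (γ * ps z / (γ * ps z + pt z)) * ps z ∂ν)
              + ∫ z, Real.log (1 - γ * ps z / (γ * ps z + pt z)) * pt z ∂ν)
      ∧ (γ * (∫ z, Real.log (γ * ps z / (γ * ps z + pt z)) * ps z ∂ν)
            + ∫ z, Real.log (1 - γ * ps z / (γ * ps z + pt z)) * pt z ∂ν)
        = (γ + 1) *
            ((γ / (γ + 1)) *
                (∫ z, ps z * Real.log (ps z / ((γ * ps z + pt z) / (γ + 1))) ∂ν)
              + (1 / (γ + 1)) *
                  ∫ z, pt z * Real.log (pt z / ((γ * ps z + pt z) / (γ + 1))) ∂ν)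
          + γ * Real.log γ - (γ + 1) * Real.log (γ + 1) := by
  have hs : ∀ z, 0 < γ * ps z + pt z := fun z => by
    have := hps0 z; have := hpt0 z; positivity
  have hγ1 : (0:ℝ) < γ + 1 := by linarith
  -- integrability of the densities
  have hips : Integrable ps ν := by
    by_contra h
    rw [integral_undef h] at hps1; norm_num at hps1
  have hipt : Integrable pt ν := by
    by_contra h
    rw [integral_undef h] at hpt1; norm_num at hpt1
  -- pointwise log rewrites
  have hlog1 : ∀ z, Real.log (γ * ps z / (γ * ps z + pt z))
      = Real.log γ + (Real.log (ps z) - Real.log (γ * ps z + pt z)) := fun z => by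
    rw [Real.log_div (mul_pos hγ (hps0 z)).ne' (hs z).ne',
        Real.log_mul hγ.ne' (hps0 z).ne']
    ring
  have hone : ∀ z, 1 - γ * ps z / (γ * ps z + pt z) = pt z / (γ * ps z + pt z) :=
    fun z => by
      rw [eq_div_iff (hs z).ne', sub_mul, div_mul_cancel₀ _ (hs z).ne']; ring
  have hlog2 : ∀ z, Real.log (1 - γ * ps z / (γ * ps z + pt z))
      = Real.log (pt z) - Real.log (γ * ps z + pt z) := fun z => by
    rw [hone z, Real.log_div (hpt0 z).ne' (hs z).ne']
  have hlog3 : ∀ z, Real.log (ps z / ((γ * ps z + pt z) / (γ + 1)))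
      = Real.log (ps z) - Real.log (γ * ps z + pt z) + Real.log (γ + 1) := fun z => by
    rw [Real.log_div (hps0 z).ne' (div_pos (hs z) hγ1).ne',
        Real.log_div (hs z).ne' hγ1.ne']
    ring
  have hlog4 : ∀ z, Real.log (pt z / ((γ * ps z + pt z) / (γ + 1)))
      = Real.log (pt z) - Real.log (γ * ps z + pt z) + Real.log (γ + 1) := fun z => by
    rw [Real.log_div (hpt0 z).ne' (div_pos (hs z) hγ1).ne',
        Real.log_div (hs z).ne' hγ1.ne']
    ring
  -- integrability of the core functions
  have hint1' : Integrable
      (fun z => (Real.log γ + (Real.log (ps z) - Real.log (γ * ps z + pt z))) * ps z) ν := by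
    exact hint1.congr (Filter.Eventually.of_forall (fun z => by simp only [hlog1]))
  have hFint : Integrable
      (fun z => (Real.log (ps z) - Real.log (γ * ps z + pt z)) * ps z) ν := by
    have heq : (fun z => (Real.log (ps z) - Real.log (γ * ps z + pt z)) * ps z)
        = fun z => (Real.log γ + (Real.log (ps z) - Real.log (γ * ps z + pt z))) * ps z
            - Real.log γ * ps z := by funext z; ring
    rw [heq]
    exact hint1'.sub (hips.const_mul _)
  have hGint : Integrable
      (fun z => (Real.log (pt z) - Real.log (γ * ps z + pt z)) * pt z) ν := by
    exact hint2.congr (Filter.Eventually.of_forall (fun z => by simp only [hlog2]))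
  -- key integral identities
  set A := ∫ z, (Real.log (ps z) - Real.log (γ * ps z + pt z)) * ps z ∂ν with hA
  set B := ∫ z, (Real.log (pt z) - Real.log (γ * ps z + pt z)) * pt z ∂ν with hB
  have I1 : ∫ z, Real.log (γ * ps z / (γ * ps z + pt z)) * ps z ∂ν
      = Real.log γ + A := by
    have heq : (fun z => Real.log (γ * ps z / (γ * ps z + pt z)) * ps z)
        = fun z => Real.log γ * ps z
            + (Real.log (ps z) - Real.log (γ * ps z + pt z)) * ps z := by
      funext z; rw [hlog1 z]; ring
    rw [heq, integral_add (hips.const_mul _) hFint, integral_const_mul, hps1, mul_one]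
  have I2 : ∫ z, Real.log (1 - γ * ps z / (γ * ps z + pt z)) * pt z ∂ν = B := by
    apply integral_congr_ae
    exact Filter.Eventually.of_forall (fun z => by simp only [hlog2])
  have I3 : ∫ z, ps z * Real.log (ps z / ((γ * ps z + pt z) / (γ + 1))) ∂ν
      = A + Real.log (γ + 1) := by
    have heq : (fun z => ps z * Real.log (ps z / ((γ * ps z + pt z) / (γ + 1))))
        = fun z => (Real.log (ps z) - Real.log (γ * ps z + pt z)) * ps z
            + Real.log (γ + 1) * ps z := by
      funext z; rw [hlog3 z]; ring
    rw [heq, integral_add hFint (hips.const_mul _), integral_const_mul, hps1, mul_one]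
  have I4 : ∫ z, pt z * Real.log (pt z / ((γ * ps z + pt z) / (γ + 1))) ∂ν
      = B + Real.log (γ + 1) := by
    have heq : (fun z => pt z * Real.log (pt z / ((γ * ps z + pt z) / (γ + 1))))
        = fun z => (Real.log (pt z) - Real.log (γ * ps z + pt z)) * pt z
            + Real.log (γ + 1) * pt z := by
      funext z; rw [hlog4 z]; ring
    rw [heq, integral_add hGint (hipt.const_mul _), integral_const_mul, hpt1, mul_one]
  constructor
  · intro g hgm hg hg1 hg2
    have hptwise : ∀ z,
        γ * (Real.log (g z) * ps z) + Real.log (1 - g z) * pt z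
          ≤ γ * (Real.log (γ * ps z / (γ * ps z + pt z)) * ps z)
            + Real.log (1 - γ * ps z / (γ * ps z + pt z)) * pt z := by
      intro z
      have hk := key_pointwise γ (ps z) (pt z) (g z) hγ (hps0 z) (hpt0 z)
        (hg z).1 (hg z).2
      rw [hone z]
      exact hk
    calc γ * (∫ z, Real.log (g z) * ps z ∂ν)
            + (∫ z, Real.log (1 - g z) * pt z ∂ν)
          = ∫ z, (γ * (Real.log (g z) * ps z) + Real.log (1 - g z) * pt z) ∂ν := by
            rw [integral_add (hg1.const_mul γ) hg2, integral_const_mul]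
      _ ≤ ∫ z, (γ * (Real.log (γ * ps z / (γ * ps z + pt z)) * ps z)
            + Real.log (1 - γ * ps z / (γ * ps z + pt z)) * pt z) ∂ν :=
            integral_mono ((hg1.const_mul γ).add hg2)
              ((hint1.const_mul γ).add hint2) hptwise
      _ = γ * (∫ z, Real.log (γ * ps z / (γ * ps z + pt z)) * ps z ∂ν)
            + ∫ z, Real.log (1 - γ * ps z / (γ * ps z + pt z)) * pt z ∂ν := by
            rw [integral_add (hint1.const_mul γ) hint2, integral_const_mul]
  · rw [I1, I2, I3, I4]
    field_simp
    ring
end
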